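/- arXiv:1602.03479 — 5 statements merged into one kernel-verified Lean document; each statement's English description precedes it below -/
import Mathlib

section
/- Let L be a finite-dimensional real Lie algebra whose Killing form κ is negative definite, and let C be a Cartan subalgebra of L. Then for every element x ∈ L there exists a Lie algebra automorphism g of L (a Lie algebra self-equivalence L ≃ L) such that g(x) lies in the orthogonal complement C⊥ of C, i.e. κ(g(x), c) = 0 for all c ∈ C. Equivalently, every element of L is orthogonal (with respect to κ) to some Cartan subalgebra of L. -/
/-!
Equip `L` with the inner product `-κ`. Then every `ad y` is skew-adjoint, so `C` is abelian (for
skew-adjoint `T`, `Tⁿ w = 0` forces `T w = 0`), and the Lie automorphisms that are isometries form a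
compact monoid `K` containing every `exp (t • ad y)`. Let `P` be the orthogonal projection onto
`C`, choose `u` in the `K`-orbit of `x` minimising `‖P u‖`, and put `a = P u`. Along
`t ↦ exp (t • ad y) u` the first variation gives `⁅u, a⁆ = 0`, and the second gives
`⟪⁅y, u⁆, ⁅y, a⁆⟫ ≤ 0` for `y` in the range of `ad a`, where `P ⁅y, u⁆ = 0` because `C` is
abelian. The operator `ad u ∘ ad a` maps into that range, so its trace `κ(u, a)` is nonnegative,
while `κ(u, a) = κ(a, a) = -‖a‖²`. Hence `a = 0`.
-/

open scoped RealInnerProductSpace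
open NormedSpace (exp)

section SkewAdjoint

variable {E : Type*} [NormedAddCommGroup E] [InnerProductSpace ℝ E]

theorem apply_eq_zero_of_pow_apply_eq_zero {T : Module.End ℝ E}
    (hT : ∀ v w, ⟪T v, w⟫ = -⟪v, T w⟫) {n : ℕ} {v : E} (h : (T ^ n) v = 0) : T v = 0 := by
  have hker : LinearMap.ker (T ^ 1) = LinearMap.ker (T ^ 2) := by
    refine le_antisymm (fun w hw => ?_) fun w hw => ?_
    · simp_all [pow_succ]
    · have hTw : ⟪T w, T w⟫ = 0 := by
        rw [hT, ← Module.End.mul_apply, ← sq, LinearMap.mem_ker.mp hw, inner_zero_right, neg_zero]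
      simpa using inner_self_eq_zero.mp hTw
  cases n with
  | zero => simp_all
  | succ m =>
    have hv : v ∈ LinearMap.ker (T ^ (1 + m)) := by rwa [add_comm, LinearMap.mem_ker]
    simpa using (Module.End.ker_pow_constant hker m).ge hv

end SkewAdjoint

theorem IsLocalMin.nonneg_of_hasDerivAt_of_hasDerivAt {f f' : ℝ → ℝ} {a k : ℝ}
    (h : IsLocalMin f a) (hf : ∀ x, HasDerivAt f (f' x) x) (hf' : HasDerivAt f' k a) : 0 ≤ k := by
  by_contra! hk
  have hsign := eventually_nhdsWithin_sign_eq_of_deriv_neg (by rwa [hf'.deriv])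
    (h.hasDerivAt_eq_zero (hf a))
  obtain ⟨b, hab, hb⟩ := mem_nhdsGT_iff_exists_Ioo_subset.mp <|
    nhdsWithin_le_nhds (hsign.and h)
  have hanti : StrictAntiOn f (Set.Icc a b) := by
    refine strictAntiOn_of_deriv_neg (convex_Icc a b)
      (fun x _ => (hf x).continuousAt.continuousWithinAt) fun x hx => ?_
    rw [interior_Icc] at hx
    have := (hb hx).1
    rwa [sign_eq_neg_one_iff.mpr (sub_neg.mpr hx.1), sign_eq_neg_one_iff, ← (hf x).deriv] at this
  have hmid : (a + b) / 2 ∈ Set.Ioo a b := ⟨by linarith [hab.out], by linarith [hab.out]⟩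
  exact (hb hmid).2.not_gt <| hanti (Set.left_mem_Icc.mpr hab.le) (Set.Ioo_subset_Icc_self hmid)
    hmid.1

section Exponential

variable {E : Type*} [NormedAddCommGroup E] [NormedSpace ℝ E] [CompleteSpace E]

theorem hasDerivAt_exp_smul_apply (D : E →L[ℝ] E) (v : E) (t : ℝ) :
    HasDerivAt (fun s : ℝ => exp (s • D) v) (D (exp (t • D) v)) t := by
  simpa using (hasDerivAt_exp_smul_const' D t).clm_apply (hasDerivAt_const t v)

theorem exp_smul_apply_bilinear (B : E →L[ℝ] E →L[ℝ] E) {D : E →L[ℝ] E}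
    (hD : ∀ v w, D (B v w) = B (D v) w + B v (D w)) (t : ℝ) (v w : E) :
    exp (t • D) (B v w) = B (exp (t • D) v) (exp (t • D) w) := by
  have hsol : ∀ s, HasDerivAt (fun s : ℝ => B (exp (s • D) v) (exp (s • D) w))
      (D (B (exp (s • D) v) (exp (s • D) w))) s := fun s => by
    rw [hD, add_comm]
    exact B.hasDerivAt_of_bilinear (fun _ => hasDerivAt_exp_smul_apply D v s)
      (fun _ => hasDerivAt_exp_smul_apply D w s)
  refine congrFun (ODE_solution_unique_univ (v := fun _ => D) (s := fun _ => Set.univ) (t₀ := 0)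
    (fun _ => D.lipschitz.lipschitzOnWith) (fun s => ⟨hasDerivAt_exp_smul_apply D _ s, trivial⟩)
    (fun s => ⟨hsol s, trivial⟩) (by simp)) t

end Exponential

section Isometries

variable {E : Type*} [NormedAddCommGroup E] [InnerProductSpace ℝ E]

def bracketIsometries (B : E →L[ℝ] E →L[ℝ] E) : Submonoid (E →L[ℝ] E) where
  carrier := {f | (∀ v w, ⟪f v, f w⟫ = ⟪v, w⟫) ∧ ∀ v w, f (B v w) = B (f v) (f w)}
  one_mem' := by simp
  mul_mem' {f g} hf hg := by simp [hf.1, hf.2, hg.1, hg.2]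

variable {B : E →L[ℝ] E →L[ℝ] E}

theorem injective_of_mem_bracketIsometries {f : E →L[ℝ] E} (hf : f ∈ bracketIsometries B) :
    Function.Injective f :=
  (LinearMap.isometryOfInner (f : E →ₗ[ℝ] E) hf.1).injective

section Complete

variable [CompleteSpace E]

theorem exp_smul_mem_bracketIsometries {D : E →L[ℝ] E} (hskew : ∀ v w, ⟪D v, w⟫ = -⟪v, D w⟫)
    (hD : ∀ v w, D (B v w) = B (D v) w + B v (D w)) (t : ℝ) :
    exp (t • D) ∈ bracketIsometries B := by
  have hskewAdj : t • D ∈ skewAdjoint (E →L[ℝ] E) := by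
    refine skewAdjoint.smul_mem t (skewAdjoint.mem_iff.mpr ?_)
    rw [ContinuousLinearMap.star_eq_adjoint, eq_comm, ContinuousLinearMap.eq_adjoint_iff]
    simp [hskew]
  -- `exp_mem_unitary_of_mem_skewAdjoint` is stated for normed `ℚ`-algebras.
  let : NormedAlgebra ℚ (E →L[ℝ] E) := .restrictScalars ℚ ℝ _
  exact ⟨ContinuousLinearMap.inner_map_map_of_mem_unitary
    (NormedSpace.exp_mem_unitary_of_mem_skewAdjoint hskewAdj), exp_smul_apply_bilinear B hD t⟩

end Complete

variable [FiniteDimensional ℝ E]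

theorem bijective_of_mem_bracketIsometries {f : E →L[ℝ] E} (hf : f ∈ bracketIsometries B) :
    Function.Bijective f :=
  ⟨injective_of_mem_bracketIsometries hf,
    LinearMap.surjective_of_injective (f := (f : E →ₗ[ℝ] E))
      (injective_of_mem_bracketIsometries hf)⟩

theorem isCompact_bracketIsometries (B : E →L[ℝ] E →L[ℝ] E) :
    IsCompact (bracketIsometries B : Set (E →L[ℝ] E)) := by
  refine Metric.isCompact_of_isClosed_isBounded ?_ ?_
  · have hev (v : E) : Continuous fun f : E →L[ℝ] E => f v :=
      continuous_id.clm_apply continuous_const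
    have hiso : IsClosed {f : E →L[ℝ] E | ∀ v w, ⟪f v, f w⟫ = ⟪v, w⟫} := by
      simp only [Set.ofPred_forall]
      exact isClosed_iInter fun v => isClosed_iInter fun w =>
        isClosed_eq ((hev v).inner (hev w)) continuous_const
    have hhom : IsClosed {f : E →L[ℝ] E | ∀ v w, f (B v w) = B (f v) (f w)} := by
      simp only [Set.ofPred_forall]
      exact isClosed_iInter fun v => isClosed_iInter fun w =>
        isClosed_eq (hev _) ((B.continuous.comp (hev v)).clm_apply (hev w))
    exact hiso.inter hhom
  · refine (Metric.isBounded_closedBall (x := (0 : E →L[ℝ] E)) (r := 1)).subset fun f hf => ?_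
    rw [Metric.mem_closedBall, dist_zero_right]
    exact f.opNorm_le_bound zero_le_one fun v => by
      rw [one_mul, ← (LinearMap.isometryOfInner (f : E →ₗ[ℝ] E) hf.1).norm_map v]; rfl

end Isometries

theorem exists_mem_forall_le_apply_mul_apply {E : Type*} [NormedAddCommGroup E]
    [NormedSpace ℝ E] {G : Submonoid (E →L[ℝ] E)} (hG : IsCompact (G : Set (E →L[ℝ] E)))
    {φ : E → ℝ} (hφ : Continuous φ) (x : E) : ∃ f ∈ G, ∀ g ∈ G, φ (f x) ≤ φ (g (f x)) := by
  have hev : Continuous fun f : E →L[ℝ] E => f x := continuous_id.clm_apply continuous_const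
  obtain ⟨_, ⟨f, hf, rfl⟩, hmin⟩ := (hG.image hev).exists_isMinOn ⟨x, 1, G.one_mem, rfl⟩
    hφ.continuousOn
  exact ⟨f, hf, fun g hg => hmin ⟨g * f, G.mul_mem hg hf, rfl⟩⟩

theorem inner_apply_eq_zero_and_nonneg_of_forall_norm_le {E F : Type*} [NormedAddCommGroup E]
    [NormedSpace ℝ E] [CompleteSpace E] [NormedAddCommGroup F] [InnerProductSpace ℝ F]
    (A : E →L[ℝ] F) (D : E →L[ℝ] E) {u : E} (hmin : ∀ t : ℝ, ‖A u‖ ≤ ‖A (exp (t • D) u)‖) :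
    ⟪A (D u), A u⟫ = 0 ∧ 0 ≤ ‖A (D u)‖ ^ 2 + ⟪A (D (D u)), A u⟫ := by
  set c : ℝ → E := fun t => exp (t • D) u
  have hc0 : c 0 = u := by simp [c]
  have hAc (t : ℝ) : HasDerivAt (fun s => A (c s)) (A (D (c t))) t :=
    A.hasFDerivAt.comp_hasDerivAt t (hasDerivAt_exp_smul_apply D u t)
  have hADc (t : ℝ) : HasDerivAt (fun s => A (D (c s))) (A (D (D (c t)))) t :=
    (A.comp D).hasFDerivAt.comp_hasDerivAt t (hasDerivAt_exp_smul_apply D u t)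
  have hf (t : ℝ) : HasDerivAt (fun s => ‖A (c s)‖ ^ 2) (2 * ⟪A (D (c t)), A (c t)⟫) t := by
    simpa [real_inner_comm] using (hAc t).norm_sq
  have hf' : HasDerivAt (fun s => 2 * ⟪A (D (c s)), A (c s)⟫)
      (2 * (‖A (D u)‖ ^ 2 + ⟪A (D (D u)), A u⟫)) 0 := by
    simpa only [hc0, real_inner_self_eq_norm_sq] using ((hADc 0).inner ℝ (hAc 0)).const_mul 2
  have hloc : IsLocalMin (fun s => ‖A (c s)‖ ^ 2) 0 := Filter.Eventually.of_forall fun t => by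
    simpa only [hc0] using pow_le_pow_left₀ (norm_nonneg _) (hmin t) 2
  constructor
  · simpa [hc0] using hloc.hasDerivAt_eq_zero (hf 0)
  · simpa using hloc.nonneg_of_hasDerivAt_of_hasDerivAt hf hf'

section Trace

variable {E : Type*} [NormedAddCommGroup E] [InnerProductSpace ℝ E] [FiniteDimensional ℝ E]

theorem LinearMap.trace_nonneg_of_inner_nonneg_on {T : E →ₗ[ℝ] E} {W : Submodule ℝ E}
    (hTW : ∀ v, T v ∈ W) (hpos : ∀ w ∈ W, 0 ≤ ⟪w, T w⟫) : 0 ≤ LinearMap.trace ℝ E T := by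
  rw [← LinearMap.trace_restrict_eq_of_forall_mem W T hTW (fun v _ => hTW v),
    LinearMap.trace_eq_sum_inner _ (stdOrthonormalBasis ℝ W)]
  exact Finset.sum_nonneg fun i _ => hpos _ (stdOrthonormalBasis ℝ W i).2

end Trace

section Bracket

variable {E : Type*} [NormedAddCommGroup E] [InnerProductSpace ℝ E] {B : E →L[ℝ] E →L[ℝ] E}

theorem inner_bracket_left (hskew : ∀ z v w, ⟪B z v, w⟫ = -⟪v, B z w⟫)
    (halt : ∀ v w, B v w = -B w v) (p q r : E) : ⟪B p q, r⟫ = ⟪p, B q r⟫ := by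
  rw [halt, inner_neg_left, hskew, neg_neg]

variable {V : Submodule ℝ E} [V.HasOrthogonalProjection]

theorem bracket_starProjection_eq_zero (hskew : ∀ z v w, ⟪B z v, w⟫ = -⟪v, B z w⟫)
    (halt : ∀ v w, B v w = -B w v) {u : E}
    (hfirst : ∀ y, ⟪V.starProjection (B y u), V.starProjection u⟫ = 0) :
    B u (V.starProjection u) = 0 := by
  have hperp (y : E) : ⟪y, B u (V.starProjection u)⟫ = 0 := by
    rw [← inner_bracket_left hskew halt, ← Submodule.starProjection_eq_self_iff.mpr
      (V.starProjection_apply_mem u), ← Submodule.inner_starProjection_left_eq_right]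
    exact hfirst y
  exact inner_self_eq_zero.mp (hperp _)

theorem starProjection_bracket_eq_zero (hskew : ∀ z v w, ⟪B z v, w⟫ = -⟪v, B z w⟫)
    (halt : ∀ v w, B v w = -B w v) (hder : ∀ z v w, B z (B v w) = B (B z v) w + B v (B z w))
    (hV : ∀ v ∈ V, ∀ w ∈ V, B v w = 0) {a u : E} (ha : a ∈ V) (hua : B u a = 0) {y : E}
    (hy : y ∈ LinearMap.range (B a : E →ₗ[ℝ] E)) : V.starProjection (B y u) = 0 := by
  obtain ⟨z, rfl⟩ := hy
  refine (V.starProjection_apply_eq_zero_iff).mpr fun c hc => ?_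
  rw [ContinuousLinearMap.coe_coe, real_inner_comm, inner_bracket_left hskew halt, hskew, hder,
    halt a u, hua, neg_zero, map_zero, zero_apply, hV a ha c hc, map_zero, add_zero,
    inner_zero_right, neg_zero]

variable [FiniteDimensional ℝ E]

theorem starProjection_eq_zero_of_variation (hskew : ∀ z v w, ⟪B z v, w⟫ = -⟪v, B z w⟫)
    (halt : ∀ v w, B v w = -B w v) (hder : ∀ z v w, B z (B v w) = B (B z v) w + B v (B z w))
    (htr : ∀ v w, ⟪v, w⟫ = -LinearMap.trace ℝ E ((B v : E →ₗ[ℝ] E) ∘ₗ (B w : E →ₗ[ℝ] E)))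
    (hV : ∀ v ∈ V, ∀ w ∈ V, B v w = 0) {u : E}
    (hfirst : ∀ y, ⟪V.starProjection (B y u), V.starProjection u⟫ = 0)
    (hsecond : ∀ y, 0 ≤ ‖V.starProjection (B y u)‖ ^ 2 +
      ⟪V.starProjection (B y (B y u)), V.starProjection u⟫) :
    V.starProjection u = 0 := by
  set a := V.starProjection u
  have ha : a ∈ V := V.starProjection_apply_mem u
  have hinner (w : E) : ⟪V.starProjection w, a⟫ = ⟪w, a⟫ := by
    rw [Submodule.inner_starProjection_left_eq_right, Submodule.starProjection_eq_self_iff.mpr ha]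
  have hua : B u a = 0 := bracket_starProjection_eq_zero hskew halt hfirst
  have hmaps (v : E) : B u (B a v) ∈ LinearMap.range (B a : E →ₗ[ℝ] E) := by
    rw [hder, hua, map_zero, zero_apply, zero_add]
    exact LinearMap.mem_range_self _ _
  have hpos (e : E) (he : e ∈ LinearMap.range (B a : E →ₗ[ℝ] E)) : 0 ≤ ⟪e, B u (B a e)⟫ := by
    have := hsecond e
    rw [starProjection_bracket_eq_zero hskew halt hder hV ha hua he, norm_zero, hinner,
      hskew] at this
    rw [real_inner_comm, hskew, halt u, halt a, inner_neg_neg, real_inner_comm]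
    linarith
  have htrace := LinearMap.trace_nonneg_of_inner_nonneg_on (T := (B u : E →ₗ[ℝ] E) ∘ₗ B a)
    hmaps hpos
  have haa : ⟪a, a⟫ ≤ 0 := by
    rw [hinner, htr]
    linarith
  exact inner_self_eq_zero.mp (le_antisymm haa real_inner_self_nonneg)

end Bracket

section Orbit

variable {E : Type*} [NormedAddCommGroup E] [InnerProductSpace ℝ E] [FiniteDimensional ℝ E]
  {B : E →L[ℝ] E →L[ℝ] E}

theorem exists_mem_bracketIsometries_apply_mem_orthogonal
    (hskew : ∀ z v w, ⟪B z v, w⟫ = -⟪v, B z w⟫)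
    (halt : ∀ v w, B v w = -B w v) (hder : ∀ z v w, B z (B v w) = B (B z v) w + B v (B z w))
    (htr : ∀ v w, ⟪v, w⟫ = -LinearMap.trace ℝ E ((B v : E →ₗ[ℝ] E) ∘ₗ (B w : E →ₗ[ℝ] E)))
    {V : Submodule ℝ E} (hV : ∀ v ∈ V, ∀ w ∈ V, B v w = 0) (x : E) :
    ∃ f ∈ bracketIsometries B, f x ∈ Vᗮ := by
  obtain ⟨f, hf, hmin⟩ := exists_mem_forall_le_apply_mul_apply (isCompact_bracketIsometries B)
    V.starProjection.continuous.norm x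
  have hvar (y : E) := inner_apply_eq_zero_and_nonneg_of_forall_norm_le V.starProjection (B y)
    fun t => hmin _ (exp_smul_mem_bracketIsometries (hskew y) (hder y) t)
  exact ⟨f, hf, V.starProjection_apply_eq_zero_iff.mp <| starProjection_eq_zero_of_variation
    hskew halt hder htr hV (fun y => (hvar y).1) fun y => (hvar y).2⟩

end Orbit

abbrev LinearMap.BilinForm.toInnerProductCore {V : Type*} [AddCommGroup V] [Module ℝ V]
    (b : LinearMap.BilinForm ℝ V) (hsymm : ∀ v w, b v w = b w v) (hpos : ∀ v, v ≠ 0 → 0 < b v v) :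
    InnerProductSpace.Core ℝ V where
  inner v w := b v w
  conj_inner_symm v w := hsymm w v
  re_inner_nonneg v := by
    rcases eq_or_ne v 0 with rfl | hv
    · simp
    · exact (hpos v hv).le
  definite v hv := by
    by_contra h
    exact (hpos v h).ne' hv
  add_left u v w := by simp
  smul_left u v r := by simp

theorem LieSubalgebra.exists_ad_pow_apply_eq_zero {R L : Type*} [CommRing R] [LieRing L]
    [LieAlgebra R L] (H : LieSubalgebra R L) [LieRing.IsNilpotent H] :
    ∃ k : ℕ, ∀ v ∈ H, ∀ w ∈ H, (LieAlgebra.ad R L v ^ k) w = 0 := by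
  obtain ⟨k, hk⟩ := LieAlgebra.nilpotent_ad_of_nilpotent_algebra R H
  refine ⟨k, fun v hv w hw => ?_⟩
  rw [← LieSubalgebra.coe_ad_pow R L H ⟨v, hv⟩ ⟨w, hw⟩, hk]
  rfl

/-- Every element of a compact semisimple real Lie algebra can be moved into the orthogonal
complement of any given Cartan subalgebra by a Lie algebra automorphism. -/
theorem orbit_meets_orthogonal_complement (L : Type*) [LieRing L] [LieAlgebra ℝ L]
    [FiniteDimensional ℝ L]
    (hneg : ∀ x : L, x ≠ 0 → killingForm ℝ L x x < 0)
    (C : LieSubalgebra ℝ L) (hC : C.IsCartanSubalgebra) :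
    ∀ x : L, ∃ g : L ≃ₗ⁅ℝ⁆ L, ∀ c ∈ C, killingForm ℝ L (g x) c = 0 := by
  intro x
  let core := (-killingForm ℝ L).toInnerProductCore
    (fun v w => by simp [LieModule.traceForm_comm ℝ L L v w]) fun v hv => by simpa using hneg v hv
  let := core.toNormedAddCommGroup
  let := InnerProductSpace.ofCore core.toCore
  let B : L →L[ℝ] L →L[ℝ] L := LinearMap.toContinuousLinearMap
    (LinearMap.toContinuousLinearMap.toLinearMap ∘ₗ (LieAlgebra.ad ℝ L : L →ₗ[ℝ] Module.End ℝ L))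
  have hinner (v w : L) : ⟪v, w⟫ = -killingForm ℝ L v w := rfl
  have hB (v w : L) : B v w = ⁅v, w⁆ := rfl
  have hskew (z v w : L) : ⟪B z v, w⟫ = -⟪v, B z w⟫ := by
    rw [hinner, hinner, hB, hB, LieModule.traceForm_apply_lie_apply']
  have halt (v w : L) : B v w = -B w v := (lie_skew v w).symm
  have hder (z v w : L) : B z (B v w) = B (B z v) w + B v (B z w) := leibniz_lie z v w
  have htr (v w : L) : ⟪v, w⟫ = -LinearMap.trace ℝ L ((B v : L →ₗ[ℝ] L) ∘ₗ (B w : L →ₗ[ℝ] L)) :=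
    congrArg Neg.neg (killingForm_apply_apply ℝ L v w)
  have : LieRing.IsNilpotent C := hC.nilpotent
  obtain ⟨k, hk⟩ := C.exists_ad_pow_apply_eq_zero
  have hV (v) (hv : v ∈ C.toSubmodule) (w) (hw : w ∈ C.toSubmodule) : B v w = 0 :=
    apply_eq_zero_of_pow_apply_eq_zero (T := LieAlgebra.ad ℝ L v) (hskew v) (hk v hv w hw)
  obtain ⟨f, hf, hfx⟩ := exists_mem_bracketIsometries_apply_mem_orthogonal hskew halt hder htr hV x
  refine ⟨LieEquiv.ofBijective { toLinearMap := f, map_lie' := hf.2 _ _ }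
    (bijective_of_mem_bracketIsometries hf), fun c hc => ?_⟩
  rw [LieModule.traceForm_comm, ← neg_eq_zero, ← hinner]
  exact hfx c hc
end

section
/- Let K be a field of characteristic 0, let L be a finite-dimensional Lie algebra over K with nondegenerate Killing form, let S be a Lie subalgebra of L whose own Killing form κ_S is nondegenerate (a semisimple subalgebra), and let C be a Cartan subalgebra of S. If s ∈ S satisfies κ_S(s, c) = 0 for all c ∈ C, then κ_L(s, c) = 0 for all c ∈ C, where κ_L is the Killing form of L. In other words, the orthogonal space of C in S with respect to κ_S is contained in the orthogonal space of C in L with respect to κ_L. -/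
/-!
Split `s = s₀ + s₁` along the Fitting decomposition `S = C ⊕ S₁` of `S` as a `C`-module, where `C`
is the zero generalized weight space and `S₁` the positive Fitting component. By invariance of
`κ_S` these two pieces are `κ_S`-orthogonal, and `κ_S` is nondegenerate on `C`, so `s ⊥ C` forces
`s₀ = 0`, i.e. `s ∈ S₁`. The inclusion `S → L` is a map of `C`-modules, so it carries `C` into the
zero generalized weight space of `L` and `S₁` into the positive Fitting component of `L`, and these
are `κ_L`-orthogonal by invariance of `κ_L`.
-/

section

open LieModule

variable {R L : Type*} [CommRing R] [LieRing L] [LieAlgebra R L]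

namespace LieAlgebra.IsKilling

lemma of_killingForm_nondegenerate (h : (killingForm R L).Nondegenerate) : IsKilling R L where
  killingCompl_top_eq_bot :=
    (LieSubmodule.eq_bot_iff _).mpr fun x hx ↦
      h.2 x fun y ↦ (LieIdeal.mem_killingCompl R L ⊤).mp hx y trivial

lemma mem_posFittingComp_of_forall_killingForm_eq_zero [IsKilling R L] [IsNoetherian R L]
    [IsArtinian R L] (H : LieSubalgebra R L) [H.IsCartanSubalgebra] {x : L}
    (hx : ∀ h ∈ H, killingForm R L x h = 0) : x ∈ posFittingComp R H L := by
  have hdec : Codisjoint (rootSpace H 0) (posFittingComp R H L) :=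
    (isCompl_genWeightSpace_zero_posFittingComp R H L).codisjoint
  rw [codisjoint_iff, ← LieSubmodule.toSubmodule_inj, LieSubmodule.sup_toSubmodule,
    LieSubmodule.top_toSubmodule, rootSpace_zero_eq R L H, LieSubalgebra.coe_toLieSubmodule] at hdec
  obtain ⟨x₀, hx₀, x₁, hx₁, rfl⟩ := Submodule.mem_sup.mp (hdec ▸ Submodule.mem_top (x := x))
  have hx₁_orth (h : L) (hh : h ∈ H) : killingForm R L x₁ h = 0 := by
    rw [traceForm_comm]
    exact killingForm_eq_zero_of_mem_zeroRoot_mem_posFitting R L H (le_zeroRootSubalgebra R L H hh)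
      hx₁
  have hx₀_zero : (⟨x₀, hx₀⟩ : H) = 0 := by
    refine (traceForm_cartan_nondegenerate R L H).1 _ fun ⟨h, hh⟩ ↦ ?_
    simpa [hx₁_orth h hh] using hx h hh
  simpa [show x₀ = 0 from congrArg Subtype.val hx₀_zero] using hx₁

end LieAlgebra.IsKilling

lemma LieSubalgebra.killingForm_eq_zero_of_mem_zeroRoot_mem_posFitting (S : LieSubalgebra R L)
    (H : LieSubalgebra R S) [LieRing.IsNilpotent H] {x₀ x₁ : S}
    (hx₀ : x₀ ∈ LieAlgebra.zeroRootSubalgebra R S H) (hx₁ : x₁ ∈ posFittingComp R H S) :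
    killingForm R L x₀ x₁ = 0 := by
  let incl : S →ₗ⁅R,H⁆ L := S.incl'.restrictLie H
  exact eq_zero_of_mem_genWeightSpace_mem_posFitting R H L
    (fun x y z ↦ traceForm_apply_lie_apply' R L L (x : L) y z)
    (map_genWeightSpace_le incl ⟨x₀, hx₀, rfl⟩) (map_posFittingComp_le incl ⟨x₁, hx₁, rfl⟩)

end

theorem orthogonal_in_subalgebra_subset_general (K L : Type*) [Field K]
    [LieRing L] [LieAlgebra K L] [FiniteDimensional K L]
    (S : LieSubalgebra K L) (hS : (killingForm K S).Nondegenerate)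
    (C : LieSubalgebra K S) (hC : C.IsCartanSubalgebra)
    (s : S) (hs : ∀ c ∈ C, killingForm K S s c = 0) :
    ∀ c ∈ C, killingForm K L (s : L) ((c : S) : L) = 0 := by
  have := LieAlgebra.IsKilling.of_killingForm_nondegenerate hS
  have hs₁ := LieAlgebra.IsKilling.mem_posFittingComp_of_forall_killingForm_eq_zero C hs
  intro c hc
  rw [LieModule.traceForm_comm]
  exact S.killingForm_eq_zero_of_mem_zeroRoot_mem_posFitting C
    (LieAlgebra.le_zeroRootSubalgebra K S C hc) hs₁

/-- If `S` is a semisimple Lie subalgebra of a semisimple Lie algebra `L` (char 0) and `C` is a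
Cartan subalgebra of `S`, then the orthogonal space of `C` in `S` (w.r.t. the Killing form of
`S`) is contained in the orthogonal space of `C` in `L` (w.r.t. the Killing form of `L`). -/
theorem orthogonal_in_subalgebra_subset (K L : Type*) [Field K] [CharZero K]
    [LieRing L] [LieAlgebra K L] [FiniteDimensional K L]
    (hL : (killingForm K L).Nondegenerate)
    (S : LieSubalgebra K L) (hS : (killingForm K S).Nondegenerate)
    (C : LieSubalgebra K S) (hC : C.IsCartanSubalgebra)
    (s : S) (hs : ∀ c ∈ C, killingForm K S s c = 0) :
    ∀ c ∈ C, killingForm K L (s : L) ((c : S) : L) = 0 :=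
  orthogonal_in_subalgebra_subset_general K L S hS C hC s hs
end

section
/- Let V be a finite-dimensional real inner product space of dimension n, and let v₁, …, vₙ be a basis of V. For each i, let rᵢ : V → V be the orthogonal reflection across the hyperplane (ℝ·vᵢ)ᗮ orthogonal to vᵢ. Then the composition r₁ ∘ r₂ ∘ ⋯ ∘ rₙ has no fixed vector other than 0: if (r₁ ∘ ⋯ ∘ rₙ)(v) = v then v = 0. (In particular, any Coxeter transformation of a finite Weyl group, i.e. a product of the reflections in all the simple roots in any order, has no nonzero fixed vector, so 1 is not an eigenvalue.) -/
/-!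
If `T = r₁ ∘ ⋯ ∘ rₙ` with `rᵢ x = x - φᵢ(x) • vᵢ`, then `x - T x` lies in the span of the `vᵢ`.
For a fixed vector `w = r₁ u` with `u = (r₂ ∘ ⋯ ∘ rₙ) w`, the difference `u - w = φ₁(u) • v₁` thus
lies in the span of `v₂, …, vₙ`, so linear independence forces `φ₁(u) = 0`, i.e. `u = w`; induction
gives `φᵢ(w) = 0` for all `i`. For reflections this says `w` is orthogonal to a basis.
-/

open scoped RealInnerProductSpace

section

variable {ι R M : Type*} [Ring R] [AddCommGroup M] [Module R M]
  {v : ι → M} {φ : ι → M → R} {r : ι → M → M}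

theorem sub_foldr_comp_mem_span (hr : ∀ i x, r i x = x - φ i x • v i) (L : List ι) (x : M) :
    x - (L.map r).foldr (· ∘ ·) id x ∈ Submodule.span R (v '' {j | j ∈ L}) := by
  induction L with
  | nil => simp
  | cons i T ih =>
    set y := (T.map r).foldr (· ∘ ·) id x
    have hstep : x - r i y = (x - y) + φ i y • v i := by rw [hr]; abel
    simp only [List.map_cons, List.foldr_cons, Function.comp_apply]
    rw [hstep]
    refine Submodule.add_mem _ (Submodule.span_mono (Set.image_mono ?_) ih) ?_
    · exact fun j hj => List.mem_cons_of_mem i hj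
    · exact Submodule.smul_mem _ _ (Submodule.subset_span ⟨i, List.mem_cons_self, rfl⟩)

theorem apply_eq_zero_of_foldr_comp_fixed (hv : LinearIndependent R v)
    (hr : ∀ i x, r i x = x - φ i x • v i) {L : List ι} (hL : L.Nodup) {w : M}
    (hw : (L.map r).foldr (· ∘ ·) id w = w) : ∀ i ∈ L, φ i w = 0 := by
  induction L with
  | nil => simp
  | cons i T ih =>
    obtain ⟨hiT, hT⟩ := List.nodup_cons.mp hL
    set u := (T.map r).foldr (· ∘ ·) id w with hu
    have hru : r i u = w := hw
    have hdiff : φ i u • v i ∈ Submodule.span R (v '' (Set.univ \ {i})) := by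
      have hmem := Submodule.neg_mem _ (sub_foldr_comp_mem_span hr T w)
      rw [neg_sub, ← hu, ← hru, hr, sub_sub_cancel] at hmem
      refine Submodule.span_mono (Set.image_mono fun j hj => ?_) hmem
      exact ⟨Set.mem_univ j, fun hji => hiT (Set.mem_singleton_iff.mp hji ▸ hj)⟩
    have hφu : φ i u = 0 := hv.eq_zero_of_smul_mem_span i _ hdiff
    have huw : u = w := by rw [← hru, hr, hφu, zero_smul, sub_zero]
    rw [huw] at hu hφu
    intro j hj
    rcases List.mem_cons.mp hj with rfl | hjT
    · exact hφu
    · exact ih hT hu.symm j hjT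

end

theorem coxeter_no_fixed_vector_general (V : Type*) [NormedAddCommGroup V] [InnerProductSpace ℝ V]
    (n : ℕ) (v : Module.Basis (Fin n) ℝ V)
    (r : Fin n → V → V)
    (hr : ∀ i x, r i x = x - (2 * ⟪x, v i⟫ / ⟪v i, v i⟫) • v i) :
    ∀ w : V, ((List.ofFn r).foldr (· ∘ ·) id) w = w → w = 0 := by
  intro w hw
  rw [List.ofFn_eq_map] at hw
  have hcoeff := apply_eq_zero_of_foldr_comp_fixed v.linearIndependent hr
    (List.nodup_finRange n) hw
  refine InnerProductSpace.ext_inner_right_basis v fun i => ?_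
  rw [inner_zero_left]
  simpa [v.ne_zero i] using hcoeff i (List.mem_finRange i)

/-- A product of the orthogonal reflections in the hyperplanes orthogonal to the members of a
basis of a finite-dimensional real inner product space (a "Coxeter transformation") has no
fixed vector other than `0`. -/
theorem coxeter_no_fixed_vector (V : Type*) [NormedAddCommGroup V] [InnerProductSpace ℝ V]
    (n : ℕ) (hdim : Module.finrank ℝ V = n) (v : Module.Basis (Fin n) ℝ V)
    (r : Fin n → V → V)
    (hr : ∀ i x, r i x = x - (2 * ⟪x, v i⟫ / ⟪v i, v i⟫) • v i) :
    ∀ w : V, ((List.ofFn r).foldr (· ∘ ·) id) w = w → w = 0 :=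
  coxeter_no_fixed_vector_general V n v r hr
end

section
/- Fix n ≥ 2 and let S be the set of n × n complex matrices A that are circulant (A = Matrix.circulant v for some v : Fin n → ℂ), skew-Hermitian (Aᴴ = −A), and trace-zero. Then: (a) S is a real subspace of the n × n complex matrices of real dimension n − 1; (b) any two elements of S commute, i.e. A·B = B·A for all A, B ∈ S; (c) S is orthogonal to the diagonal Cartan subalgebra of 𝔰𝔲(n) with respect to the trace form: for every A ∈ S and every diagonal skew-Hermitian trace-zero matrix D, trace(A·D) = 0. (Consequently S and the diagonal trace-zero skew-Hermitian matrices are two orthogonal Cartan subalgebras of 𝔰𝔲(n) with respect to minus its Killing form.) -/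
/-!
Circulant matrices form an `n`-dimensional complex subspace closed under conjugate transposition,
so its skew-Hermitian part is a real form of it: together with its image under multiplication by
`i` it spans the whole subspace, and the two meet only in `0`, so it has real dimension `n`. The
trace maps it onto the line `ℝ i` (it contains `i • 1`), hence its trace-zero part has dimension
`n - 1`. Circulants commute, and a circulant has constant diagonal `v 0`, so
`trace (circulant v * D) = v 0 * trace D` for diagonal `D`.
-/

open Matrix Module

theorem Submodule.finrank_inf_ker_add_finrank_map {K V V₂ : Type*} [DivisionRing K]
    [AddCommGroup V] [Module K V] [AddCommGroup V₂] [Module K V₂] [FiniteDimensional K V]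
    (P : Submodule K V) (f : V →ₗ[K] V₂) :
    finrank K ↥(P ⊓ LinearMap.ker f) + finrank K ↥(P.map f) = finrank K P := by
  have h := (f.domRestrict P).finrank_range_add_finrank_ker
  rw [LinearMap.range_domRestrict, LinearMap.ker_domRestrict] at h
  rw [← Submodule.map_comap_subtype, Submodule.finrank_map_subtype_eq]
  omega

section ComplexStarModule

variable {M : Type*} [AddCommGroup M] [Module ℂ M] [StarAddMonoid M]

theorem eq_zero_of_isSelfAdjoint_of_mem_skewAdjoint {x : M} (hself : IsSelfAdjoint x)
    (hskew : x ∈ skewAdjoint M) : x = 0 := by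
  have h : (2 : ℂ) • x = 0 := by
    rw [two_smul]
    nth_rw 1 [← hself.star_eq]
    rw [skewAdjoint.mem_iff.1 hskew, neg_add_cancel]
  exact (smul_eq_zero.1 h).resolve_left two_ne_zero

theorem Submodule.finrank_restrictScalars_inf_skewAdjoint [StarModule ℂ M]
    [FiniteDimensional ℂ M] (C : Submodule ℂ M) (hC : ∀ x ∈ C, star x ∈ C) :
    finrank ℝ ↥(C.restrictScalars ℝ ⊓ skewAdjoint.submodule ℝ M) = finrank ℂ C := by
  set P := C.restrictScalars ℝ ⊓ skewAdjoint.submodule ℝ M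
  set e : M ≃ₗ[ℝ] M :=
    (LinearEquiv.smulOfNeZero ℂ M Complex.I Complex.I_ne_zero).restrictScalars ℝ
  have hsup : P ⊔ P.map (e : M →ₗ[ℝ] M) = C.restrictScalars ℝ := by
    refine le_antisymm (sup_le inf_le_left ?_) fun x hx => ?_
    · rintro _ ⟨y, hy, rfl⟩
      exact C.smul_mem Complex.I hy.1
    · have hxstar : star x ∈ C := hC x hx
      have hself : (selfAdjointPart ℝ x : M) ∈ C := by
        rw [selfAdjointPart_apply_coe]
        exact C.smul_of_tower_mem _ (C.add_mem hx hxstar)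
      have hskew : (skewAdjointPart ℝ x : M) ∈ C := by
        rw [skewAdjointPart_apply_coe]
        exact C.smul_of_tower_mem _ (C.sub_mem hx hxstar)
      have hI :
          Complex.I • -Complex.I • (selfAdjointPart ℝ x : M) = selfAdjointPart ℝ x := by
        rw [smul_smul, mul_neg, Complex.I_mul_I, neg_neg, one_smul]
      rw [← StarModule.selfAdjointPart_add_skewAdjointPart ℝ x, add_comm]
      refine Submodule.add_mem_sup ⟨hskew, (skewAdjointPart ℝ x).2⟩
        ⟨-Complex.I • (selfAdjointPart ℝ x : M), ⟨C.smul_mem _ hself, ?_⟩, hI⟩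
      change _ ∈ skewAdjoint M
      rw [← Complex.isSelfAdjoint_I_smul_iff_mem_skewAdjoint, hI]
      exact (selfAdjointPart ℝ x).2
  have hinf : P ⊓ P.map (e : M →ₗ[ℝ] M) = ⊥ := by
    rw [Submodule.eq_bot_iff]
    rintro _ ⟨⟨-, hskew⟩, ⟨z, ⟨-, hz⟩, rfl⟩⟩
    exact eq_zero_of_isSelfAdjoint_of_mem_skewAdjoint
      (Complex.isSelfAdjoint_I_smul_iff_mem_skewAdjoint.2 hz) hskew
  have h := Submodule.finrank_sup_add_finrank_inf_eq P (P.map (e : M →ₗ[ℝ] M))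
  rw [hsup, hinf, finrank_bot, LinearEquiv.finrank_map_eq] at h
  have hreal : finrank ℝ (C.restrictScalars ℝ) = 2 * finrank ℂ C := finrank_real_of_complex C
  omega

end ComplexStarModule

namespace Matrix

def circulantLinearMap (R : Type*) {α n : Type*} [Semiring R] [AddCommMonoid α] [Module R α]
    [Sub n] : (n → α) →ₗ[R] Matrix n n α where
  toFun := circulant
  map_add' := circulant_add
  map_smul' := circulant_smul

theorem trace_circulant_mul_of_isDiag {α m : Type*} [NonUnitalNonAssocSemiring α] [Fintype m]
    [AddGroup m] (v : m → α) {D : Matrix m m α} (hD : D.IsDiag) :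
    (circulant v * D).trace = v 0 * D.trace := by
  classical
  rw [← hD.diagonal_diag]
  simp [trace, mul_diagonal, circulant_apply, Finset.mul_sum]

theorem re_trace_eq_zero_of_mem_skewAdjoint {m : Type*} [Fintype m] {A : Matrix m m ℂ}
    (hA : A ∈ skewAdjoint (Matrix m m ℂ)) : A.trace.re = 0 := by
  have h := congrArg (fun B => (trace B).re) (skewAdjoint.mem_iff.1 hA)
  simp only [star_eq_conjTranspose, trace_conjTranspose, trace_neg, Complex.star_def,
    Complex.conj_re, Complex.neg_re] at h
  linarith

theorem Fin.star_mem_range_circulantLinearMap {R α : Type*} [Semiring R] [AddCommMonoid α]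
    [Module R α] [Star α] {n : ℕ} {A : Matrix (Fin n) (Fin n) α}
    (hA : A ∈ LinearMap.range (circulantLinearMap R)) :
    star A ∈ LinearMap.range (circulantLinearMap R) := by
  obtain ⟨v, rfl⟩ := hA
  exact ⟨_, (Fin.conjTranspose_circulant v).symm⟩

end Matrix

section SkewHermitianCirculant

variable (n : ℕ)

noncomputable def skewHermitianCirculant : Submodule ℝ (Matrix (Fin n) (Fin n) ℂ) :=
  (LinearMap.range (circulantLinearMap ℂ)).restrictScalars ℝ ⊓ skewAdjoint.submodule ℝ _

theorem finrank_skewHermitianCirculant : finrank ℝ (skewHermitianCirculant n) = n := by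
  rw [skewHermitianCirculant, Submodule.finrank_restrictScalars_inf_skewAdjoint _
    fun _ => Fin.star_mem_range_circulantLinearMap, LinearMap.finrank_range_of_inj
    (Fin.circulant_injective n), finrank_fin_fun]

theorem map_trace_skewHermitianCirculant [NeZero n] :
    (skewHermitianCirculant n).map (traceLinearMap (Fin n) ℝ ℂ) = ℝ ∙ Complex.I := by
  refine le_antisymm (Submodule.map_le_iff_le_comap.2 fun A hA => ?_) ?_
  · refine Submodule.mem_span_singleton.2 ⟨A.trace.im, Complex.ext ?_ ?_⟩
    · simp [re_trace_eq_zero_of_mem_skewAdjoint hA.2]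
    · simp
  · rw [Submodule.span_singleton_le_iff_mem]
    refine ⟨(n : ℝ)⁻¹ • Complex.I • 1, ⟨?_, ?_⟩, ?_⟩
    · change _ ∈ LinearMap.range _
      exact Submodule.smul_of_tower_mem _ _ <| Submodule.smul_mem _ _
        ⟨Pi.single 0 1, circulant_single_one ℂ (Fin n)⟩
    · change _ ∈ skewAdjoint _
      exact skewAdjoint.smul_mem _
        (Complex.I_smul_mem_skewAdjoint_iff_isSelfAdjoint.2 (IsSelfAdjoint.one _))
    · have hn : (n : ℂ) ≠ 0 := Nat.cast_ne_zero.2 (NeZero.ne n)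
      simp only [map_smul, traceLinearMap_apply, trace_smul, trace_one, Fintype.card_fin,
        smul_eq_mul, Complex.real_smul, Complex.ofReal_inv, Complex.ofReal_natCast]
      field_simp

theorem finrank_skewHermitianCirculant_inf_ker_trace [NeZero n] :
    finrank ℝ ↥(skewHermitianCirculant n ⊓ LinearMap.ker (traceLinearMap (Fin n) ℝ ℂ)) =
      n - 1 := by
  have h :=
    (skewHermitianCirculant n).finrank_inf_ker_add_finrank_map (traceLinearMap (Fin n) ℝ ℂ)
  rw [map_trace_skewHermitianCirculant, finrank_span_singleton Complex.I_ne_zero,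
    finrank_skewHermitianCirculant] at h
  omega

end SkewHermitianCirculant

/-- The set of circulant, skew-Hermitian, trace-zero `n × n` complex matrices is a real
subspace of dimension `n - 1`, is commutative, and is trace-orthogonal to the diagonal Cartan
subalgebra of `𝔰𝔲(n)`. -/
theorem circulant_orthogonal_cartan_su (n : ℕ) (hn : 2 ≤ n)
    (S : Set (Matrix (Fin n) (Fin n) ℂ))
    (hS : S = {A : Matrix (Fin n) (Fin n) ℂ |
      (∃ v : Fin n → ℂ, A = Matrix.circulant v) ∧ Aᴴ = -A ∧ A.trace = 0}) :
    (∃ W : Submodule ℝ (Matrix (Fin n) (Fin n) ℂ),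
      (W : Set (Matrix (Fin n) (Fin n) ℂ)) = S ∧ Module.finrank ℝ W = n - 1) ∧
    (∀ A ∈ S, ∀ B ∈ S, A * B = B * A) ∧
    (∀ A ∈ S, ∀ D : Matrix (Fin n) (Fin n) ℂ,
      D.IsDiag → Dᴴ = -D → D.trace = 0 → (A * D).trace = 0) := by
  have : NeZero n := ⟨by omega⟩
  subst hS
  refine ⟨⟨_, ?_, finrank_skewHermitianCirculant_inf_ker_trace n⟩, ?_, ?_⟩
  · ext A
    simp only [skewHermitianCirculant, SetLike.mem_coe, Submodule.mem_inf,
      Submodule.restrictScalars_mem, LinearMap.mem_range, LinearMap.mem_ker,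
      traceLinearMap_apply, Set.mem_ofPred_eq, and_assoc]
    exact and_congr (exists_congr fun v => eq_comm) Iff.rfl
  · rintro _ ⟨⟨v, rfl⟩, -⟩ _ ⟨⟨w, rfl⟩, -⟩
    exact Fin.circulant_mul_comm v w
  · rintro _ ⟨⟨v, rfl⟩, -⟩ D hD - hD0
    rw [trace_circulant_mul_of_isDiag v hD, hD0, mul_zero]
end

section
/- In the 6 × 6 real matrices, let A = !![0,-1,0; 1,0,0; 0,0,0], B = !![0,0,0; 0,0,0; 1,0,0], C = !![0,0,0; 0,0,-1; 0,1,0] (each 3 × 3), and set x₁ = the block matrix [[A, 0₃],[0₃, 0₃]], x₂ = [[0₃, B],[−Bᵀ, 0₃]], x₃ = [[0₃, 0₃],[0₃, C]]. Let C₆ be the set of block matrices [[0₃, Λ],[−Λ, 0₃]] with Λ a real 3 × 3 diagonal matrix. Then x₁, x₂, x₃ are skew-symmetric, linearly independent over ℝ, mutually commute (xᵢ·xⱼ = xⱼ·xᵢ for all i, j), and trace(xᵢ·y) = 0 for each i and every y ∈ C₆. (Consequently the real span of {x₁, x₂, x₃} is a Cartan subalgebra of 𝔰𝔬(6) orthogonal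 to the Cartan subalgebra C₆ with respect to minus the Killing form.) -/
open Matrix

/-!
The three matrices are supported in the three different block positions of a `3 + 3` block
matrix, which makes them linearly independent, and the `3 × 3` blocks satisfy
`A * B = 0`, `Bᵀ * A = 0`, `B * C = 0`, `C * Bᵀ = 0`, which is exactly what is needed for the
block products to commute. The elements of `C₆` are off-diagonal in block form, so their
product with the block-diagonal `x₁` and `x₃` is again off-diagonal and traceless, while the
trace of their product with `x₂` only sees the diagonal of `B`, which vanishes.
-/

namespace Matrix

variable {l m n R : Type*}

theorem linearIndependent_of_entries [Fintype l] [Ring R] [NoZeroDivisors R]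
    (x : l → Matrix m n R) (p : l → m) (q : l → n) (hdiag : ∀ i, x i (p i) (q i) ≠ 0)
    (hoff : ∀ i j, i ≠ j → x j (p i) (q i) = 0) : LinearIndependent R x := by
  rw [Fintype.linearIndependent_iff]
  intro g hg i
  have hentry : ∑ j, g j * x j (p i) (q i) = 0 := by
    simpa [Matrix.sum_apply] using congrFun (congrFun hg (p i)) (q i)
  rw [Finset.sum_eq_single i (fun j _ hji => by rw [hoff i j hji.symm, mul_zero])
    (by simp)] at hentry
  exact (mul_eq_zero.mp hentry).resolve_right (hdiag i)

theorem trace_fromBlocks [Fintype m] [Fintype n] [AddCommMonoid R] (A : Matrix m m R)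
    (B : Matrix m n R) (C : Matrix n m R) (D : Matrix n n R) :
    trace (fromBlocks A B C D) = trace A + trace D := by
  simp [trace, Fintype.sum_sum_type]

section Transpose

variable [AddGroup R]

theorem fromBlocks_diag_transpose_eq_neg {A : Matrix m m R} {D : Matrix n n R}
    (hA : Aᵀ = -A) (hD : Dᵀ = -D) : (fromBlocks A 0 0 D)ᵀ = -fromBlocks A 0 0 D := by
  simp [fromBlocks_transpose, fromBlocks_neg, hA, hD]

theorem fromBlocks_offDiag_transpose_eq_neg (B : Matrix m n R) :
    (fromBlocks 0 B (-Bᵀ) 0)ᵀ = -fromBlocks 0 B (-Bᵀ) 0 := by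
  simp [fromBlocks_transpose, fromBlocks_neg]

end Transpose

section Product

variable [Fintype m] [Fintype n] [Ring R]

theorem commute_fromBlocks_diag {A A' : Matrix m m R} {D D' : Matrix n n R}
    (hA : Commute A A') (hD : Commute D D') :
    Commute (fromBlocks A 0 0 D) (fromBlocks A' 0 0 D') := by
  simp [Commute, SemiconjBy, fromBlocks_multiply, hA.eq, hD.eq]

theorem commute_fromBlocks_diag_offDiag {A : Matrix m m R} {D : Matrix n n R}
    {B : Matrix m n R} (hAB : A * B = B * D) (hDB : D * Bᵀ = Bᵀ * A) :
    Commute (fromBlocks A 0 0 D) (fromBlocks 0 B (-Bᵀ) 0) := by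
  simp [Commute, SemiconjBy, fromBlocks_multiply, hAB, hDB]

theorem trace_fromBlocks_diag_mul_offDiag (A : Matrix m m R) (D : Matrix n n R)
    (X : Matrix m n R) (Y : Matrix n m R) :
    trace (fromBlocks A 0 0 D * fromBlocks 0 X Y 0) = 0 := by
  simp [fromBlocks_multiply, trace_fromBlocks]

variable [DecidableEq n]

theorem trace_mul_diagonal_eq_zero {B : Matrix n n R} (hB : ∀ i, B i i = 0) (d : n → R) :
    trace (B * diagonal d) = 0 := by
  simp [trace, mul_diagonal, hB]

theorem trace_fromBlocks_offDiag_mul_offDiag_diagonal {B : Matrix n n R}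
    (hB : ∀ i, B i i = 0) (d : n → R) :
    trace (fromBlocks 0 B (-Bᵀ) 0 * fromBlocks 0 (diagonal d) (-diagonal d) 0) = 0 := by
  have hBt : ∀ i, Bᵀ i i = 0 := hB
  simp [fromBlocks_multiply, trace_fromBlocks, trace_mul_diagonal_eq_zero hB,
    trace_mul_diagonal_eq_zero hBt]

end Product

end Matrix

/-- The explicit block matrices `x₁`, `x₂`, `x₃` span a Cartan subalgebra of `𝔰𝔬(6)`
orthogonal to the standard Cartan subalgebra `C₆`. -/
theorem so6_orthogonal_cartan
    (A B C : Matrix (Fin 3) (Fin 3) ℝ)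
    (hA : A = !![0,-1,0; 1,0,0; 0,0,0])
    (hB : B = !![0,0,0; 0,0,0; 1,0,0])
    (hC : C = !![0,0,0; 0,0,-1; 0,1,0])
    (x₁ x₂ x₃ : Matrix (Fin 3 ⊕ Fin 3) (Fin 3 ⊕ Fin 3) ℝ)
    (hx₁ : x₁ = Matrix.fromBlocks A 0 0 0)
    (hx₂ : x₂ = Matrix.fromBlocks 0 B (-Bᵀ) 0)
    (hx₃ : x₃ = Matrix.fromBlocks 0 0 0 C)
    (C₆ : Set (Matrix (Fin 3 ⊕ Fin 3) (Fin 3 ⊕ Fin 3) ℝ))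
    (hC₆ : C₆ = {y : Matrix (Fin 3 ⊕ Fin 3) (Fin 3 ⊕ Fin 3) ℝ | ∃ d : Fin 3 → ℝ,
      y = Matrix.fromBlocks 0 (Matrix.diagonal d) (-(Matrix.diagonal d)) 0}) :
    (x₁ᵀ = -x₁ ∧ x₂ᵀ = -x₂ ∧ x₃ᵀ = -x₃) ∧
    LinearIndependent ℝ ![x₁, x₂, x₃] ∧
    (x₁ * x₂ = x₂ * x₁ ∧ x₁ * x₃ = x₃ * x₁ ∧ x₂ * x₃ = x₃ * x₂) ∧
    (∀ y ∈ C₆, (x₁ * y).trace = 0 ∧ (x₂ * y).trace = 0 ∧ (x₃ * y).trace = 0) := by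
  obtain ⟨hAskew, hCskew⟩ : Aᵀ = -A ∧ Cᵀ = -C := by
    subst hA hC; constructor <;> ext i j <;> fin_cases i <;> fin_cases j <;> simp
  obtain ⟨hAB, hBtA, hBC, hCBt⟩ :
      A * B = 0 ∧ Bᵀ * A = 0 ∧ B * C = 0 ∧ C * Bᵀ = 0 := by
    subst hA hB hC
    refine ⟨?_, ?_, ?_, ?_⟩ <;> ext i j <;> fin_cases i <;> fin_cases j <;>
      simp [mul_apply, Fin.sum_univ_three]
  have hBdiag : ∀ i, B i i = 0 := by subst hB; intro i; fin_cases i <;> rfl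
  subst hx₁ hx₂ hx₃ hC₆
  refine ⟨⟨fromBlocks_diag_transpose_eq_neg hAskew (by simp),
      fromBlocks_offDiag_transpose_eq_neg B,
      fromBlocks_diag_transpose_eq_neg (by simp) hCskew⟩, ?_,
    ⟨(commute_fromBlocks_diag_offDiag (by simp [hAB]) (by simp [hBtA])).eq,
      (commute_fromBlocks_diag (Commute.zero_right A) (Commute.zero_left C)).eq,
      (commute_fromBlocks_diag_offDiag (by simp [hBC]) (by simp [hCBt])).eq.symm⟩,
    ?_⟩
  · -- the entries `(1,0)` of `A`, `(2,0)` of `B` and `(2,1)` of `C` isolate the three matrices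
    refine linearIndependent_of_entries _ ![.inl 1, .inl 2, .inr 2] ![.inl 0, .inr 0, .inr 1]
      ?_ ?_ <;> subst hA hB hC <;> simp [Fin.forall_fin_succ]
  · rintro y ⟨d, rfl⟩
    exact ⟨trace_fromBlocks_diag_mul_offDiag _ _ _ _,
      trace_fromBlocks_offDiag_mul_offDiag_diagonal hBdiag d,
      trace_fromBlocks_diag_mul_offDiag _ _ _ _⟩
end
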